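/- For every r > 0 and every real number ℓ with max(-1, -(d+2γ)/(2β)) < ℓ < 0, the function t ↦ 𝓗_{σ,γ}(ℓ+it)·r^{-(ℓ+it)} is Lebesgue (Bochner) integrable on ℝ; in particular the Mellin–Barnes integral 𝔥_{σ,γ}(r) = (1/(2π)) ∫_ℝ 𝓗_{σ,γ}(ℓ+it)·r^{-(ℓ+it)} dt is well defined. -/

import Mathlib

/-!
On a vertical line `Γ` decays like a power of `|y|` times `e^{-π|y|/2}`. For `x ∈ (0,1]`, Euler's
limit formula compares `‖Γ(x+iy)‖ / Γ(x)` with `‖Γ(1+iy)‖` factor by factor, and the reflection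
formula gives `‖Γ(1+iy)‖² = πy / sinh(πy)`; the functional equation moves any other `x` into
`(0,1]` at the price of a polynomial factor. Reflection once more gives
`1/Γ(x+iy) = O(|y|^k e^{π|y|/2})`. Along `Re z = ℓ` the three numerator factors of `𝓗` therefore
decay like `e^{-π(β+2)|t|/2}` and the two reciprocal ones grow at most like `e^{π(β+α)|t|/2}`, up to
polynomial factors, so the integrand is `O(e^{-π(2-α)|t|/4})` because `α < 2`. The bounds on `ℓ`
put the arguments of the numerator factors in the right half-plane, so the integrand is continuous.
-/

open Complex MeasureTheory Filter Asymptotics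

/-- `𝓗_{σ,γ}(z) = Γ(d/2+γ+βz)·Γ(1+z)·Γ(-z) / (Γ(-γ-βz)·Γ(1-σ+αz))`. Since `Complex.Gamma`
vanishes at the poles of `Γ`, dividing by it realizes the entire function `1/Γ`. -/
noncomputable def HFun (d : ℕ) (α β γ σ : ℝ) (z : ℂ) : ℂ :=
  Complex.Gamma ((d : ℂ) / 2 + (γ : ℂ) + (β : ℂ) * z) * Complex.Gamma (1 + z) *
      Complex.Gamma (-z) /
    (Complex.Gamma (-(γ : ℂ) - (β : ℂ) * z) * Complex.Gamma (1 - (σ : ℂ) + (α : ℂ) * z))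

/-- `t ↦ 𝓗_{σ,γ}(ℓ+it)·r^{-(ℓ+it)}`, with `r^{-z} = exp(-z·ln r)`. -/
noncomputable def mellinKernel (d : ℕ) (α β γ σ ℓ r : ℝ) (t : ℝ) : ℂ :=
  HFun d α β γ σ ((ℓ : ℂ) + (t : ℂ) * Complex.I) *
    Complex.exp (-((ℓ : ℂ) + (t : ℂ) * Complex.I) * (Real.log r : ℂ))

/-- The Mellin-Barnes integral `𝔥_{σ,γ}(r)`. -/
noncomputable def hFun (d : ℕ) (α β γ σ ℓ : ℝ) (r : ℝ) : ℂ :=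
  ((1 / (2 * Real.pi) : ℝ) : ℂ) * ∫ t : ℝ, mellinKernel d α β γ σ ℓ r t

open scoped Real ComplexConjugate

lemma mul_norm_add_mul_I_le {u v : ℝ} (hu : 0 ≤ u) (huv : u ≤ v) (y : ℝ) :
    u * ‖(v : ℂ) + y * I‖ ≤ v * ‖(u : ℂ) + y * I‖ := by
  refine le_of_pow_le_pow_left₀ two_ne_zero (mul_nonneg (hu.trans huv) (norm_nonneg _)) ?_
  rw [mul_pow, mul_pow, Complex.sq_norm, Complex.sq_norm, normSq_add_mul_I, normSq_add_mul_I]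
  nlinarith [mul_le_mul_of_nonneg_right (pow_le_pow_left₀ hu huv 2) (sq_nonneg y)]

lemma norm_GammaSeq {n : ℕ} (hn : 0 < n) (s : ℂ) :
    ‖GammaSeq s n‖ = (n : ℝ) ^ s.re * n.factorial / ∏ j ∈ Finset.range (n + 1), ‖s + j‖ := by
  rw [GammaSeq, norm_div, norm_mul, norm_natCast_cpow_of_pos hn, norm_prod, Complex.norm_natCast]

lemma norm_add_natCast_pos {s : ℂ} (hs : 0 < s.re) (j : ℕ) : 0 < ‖s + j‖ :=
  norm_pos_iff.2 fun h => by
    have := congrArg re h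
    simp only [add_re, natCast_re, zero_re] at this
    linarith [j.cast_nonneg (α := ℝ)]

lemma norm_GammaSeq_mul_le {x : ℝ} (hx : 0 < x) (hx1 : x ≤ 1) (y : ℝ) {n : ℕ} (hn : 0 < n) :
    ‖GammaSeq (x + y * I) n‖ * ‖GammaSeq 1 n‖ ≤ ‖GammaSeq x n‖ * ‖GammaSeq (1 + y * I) n‖ := by
  simp only [norm_GammaSeq hn, add_re, ofReal_re, mul_re, I_re, I_im, ofReal_im, one_re, mul_zero,
    mul_one, sub_self, add_zero]
  rw [div_mul_div_comm, div_mul_div_comm, ← Finset.prod_mul_distrib, ← Finset.prod_mul_distrib]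
  refine div_le_div_of_nonneg_left (by positivity)
    (Finset.prod_pos fun j _ => mul_pos (norm_add_natCast_pos (by simpa) j)
      (norm_add_natCast_pos (by simp) j))
    (Finset.prod_le_prod (fun _ _ => by positivity) fun j _ => ?_)
  have key := mul_norm_add_mul_I_le (u := x + j) (v := 1 + j) (by positivity) (by linarith) y
  have e1 : ∀ a : ℝ, (a : ℂ) + y * I + j = ((a + j : ℝ) : ℂ) + y * I := fun a => by push_cast; ring
  have e2 : ‖(x : ℂ) + j‖ = x + j := by
    rw [← ofReal_natCast, ← ofReal_add, norm_real, Real.norm_of_nonneg (by positivity)]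
  have e3 : ‖(1 : ℂ) + j‖ = 1 + j := by
    rw [← ofReal_natCast, ← ofReal_one, ← ofReal_add, norm_real, Real.norm_of_nonneg (by positivity)]
  rw [e1, e2, e3, ← ofReal_one, e1]
  linarith

lemma norm_Gamma_le_Gamma_mul_norm_Gamma_one_add {x : ℝ} (hx : 0 < x) (hx1 : x ≤ 1) (y : ℝ) :
    ‖Gamma (x + y * I)‖ ≤ Real.Gamma x * ‖Gamma (1 + y * I)‖ := by
  have h := le_of_tendsto_of_tendsto
    ((GammaSeq_tendsto_Gamma _).norm.mul (GammaSeq_tendsto_Gamma 1).norm)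
    ((GammaSeq_tendsto_Gamma x).norm.mul (GammaSeq_tendsto_Gamma _).norm)
    (eventually_atTop.2 ⟨1, fun n hn => norm_GammaSeq_mul_le hx hx1 y hn⟩)
  rwa [Gamma_one, norm_one, mul_one, Gamma_ofReal, norm_real,
    Real.norm_of_nonneg (Real.Gamma_pos_of_pos hx).le] at h

lemma norm_Gamma_one_add_mul_I_sq_mul_sinh (y : ℝ) :
    ‖Gamma (1 + y * I)‖ ^ 2 * Real.sinh (π * y) = π * y := by
  rcases eq_or_ne y 0 with rfl | hy
  · simp
  have hyI : (y : ℂ) * I ≠ 0 := by simp [hy]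
  have hsinh : (Real.sinh (π * y) : ℂ) ≠ 0 := by
    exact_mod_cast (Real.sinh_ne_zero.2 (mul_ne_zero Real.pi_ne_zero hy))
  have hconj : Gamma (1 - y * I) = conj (Gamma (1 + y * I)) := by
    rw [← Gamma_conj]; congr 1; simp [Complex.ext_iff]
  have hsin : sin (π * (y * I)) = Real.sinh (π * y) * I := by
    rw [← mul_assoc, ← ofReal_mul, sin_mul_I, ofReal_sinh]
  have hrefl : Gamma (y * I) * conj (Gamma (1 + y * I)) * (Real.sinh (π * y) * I) = π := by
    rw [← hconj, Gamma_mul_Gamma_one_sub, hsin, div_mul_cancel₀ _ (mul_ne_zero hsinh I_ne_zero)]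
  apply ofReal_injective
  rw [ofReal_mul, Complex.sq_norm, ← mul_conj]
  nth_rw 1 [add_comm, Gamma_add_one _ hyI]
  rw [ofReal_mul]
  linear_combination (y : ℂ) * hrefl

lemma exp_div_four_le_sinh {u : ℝ} (hu : 1 ≤ u) : rexp u / 4 ≤ Real.sinh u := by
  have h1 : 2 ≤ rexp u := by linarith [Real.add_one_le_exp u]
  have h2 : rexp (-u) ≤ 1 := Real.exp_le_one_iff.2 (by linarith)
  rw [Real.sinh_eq]
  linarith

lemma norm_Gamma_one_add_mul_I_le {y : ℝ} (hy : 1 ≤ |y|) :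
    ‖Gamma (1 + y * I)‖ ≤ 2 * π * |y| * rexp (-(π / 2) * |y|) := by
  set u := π * |y| with hu
  have hu1 : 1 ≤ u := by nlinarith [Real.pi_gt_three]
  have hid : ‖Gamma (1 + y * I)‖ ^ 2 * Real.sinh u = u := by
    have h := norm_Gamma_one_add_mul_I_sq_mul_sinh y
    rcases abs_choice y with h' | h' <;> rw [hu, h']
    · exact h
    · rw [mul_neg, Real.sinh_neg]; linarith
  have hexp : rexp (-(π / 2) * |y|) ^ 2 * rexp u = 1 := by
    rw [← Real.exp_nat_mul, ← Real.exp_add, Real.exp_eq_one_iff, hu]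
    push_cast
    ring
  have hle : ‖Gamma (1 + y * I)‖ ^ 2 * rexp u ≤ 4 * u := by
    nlinarith [exp_div_four_le_sinh hu1, sq_nonneg ‖Gamma (1 + y * I)‖]
  refine le_of_pow_le_pow_left₀ two_ne_zero (by positivity) ?_
  refine le_of_mul_le_mul_right (hle.trans ?_) (Real.exp_pos u)
  calc 4 * u ≤ 4 * u ^ 2 := by nlinarith
    _ = (2 * π * |y| * rexp (-(π / 2) * |y|)) ^ 2 * rexp u := by
        linear_combination (-4 * π ^ 2 * |y| ^ 2) * hexp + 4 * (u + π * |y|) * hu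

lemma norm_Gamma_le_norm_Gamma_add_nat {s : ℂ} (hs : 1 ≤ |s.im|) (n : ℕ) :
    ‖Gamma s‖ ≤ ‖Gamma (s + n)‖ := by
  induction n with
  | zero => simp
  | succ n ih =>
    have hn : 1 ≤ ‖s + n‖ := hs.trans (by simpa using abs_im_le_norm (s + n))
    rw [Nat.cast_succ, ← add_assoc, Gamma_add_one _ (norm_pos_iff.1 (by linarith)), norm_mul]
    exact ih.trans (le_mul_of_one_le_left (norm_nonneg _) hn)

lemma norm_Gamma_add_nat_le {s : ℂ} (hs : s.im ≠ 0) (n : ℕ) :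
    ‖Gamma (s + n)‖ ≤ (‖s‖ + n) ^ n * ‖Gamma s‖ := by
  induction n with
  | zero => simp
  | succ n ih =>
    have hsn : s + n ≠ 0 := fun h => hs (by simpa using congrArg im h)
    have h1 : ‖s + n‖ ≤ ‖s‖ + (n + 1) := (norm_add_le _ _).trans (by simp)
    have h2 : (‖s‖ + n) ^ n ≤ (‖s‖ + (n + 1)) ^ n :=
      pow_le_pow_left₀ (by positivity) (by linarith) n
    rw [Nat.cast_succ, ← add_assoc, Gamma_add_one _ hsn, norm_mul, pow_succ']
    calc ‖s + n‖ * ‖Gamma (s + n)‖ ≤ (‖s‖ + (n + 1)) * ((‖s‖ + n) ^ n * ‖Gamma s‖) :=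
          mul_le_mul h1 ih (norm_nonneg _) (by positivity)
      _ ≤ (‖s‖ + (n + 1)) * ((‖s‖ + (n + 1)) ^ n * ‖Gamma s‖) := by gcongr
      _ = _ := by push_cast; ring

lemma norm_sin_le_exp_abs_im (z : ℂ) : ‖sin z‖ ≤ rexp |z.im| := by
  rw [sin, norm_div, norm_mul, norm_I, mul_one, Complex.norm_ofNat]
  calc ‖exp (-z * I) - exp (z * I)‖ / 2 ≤ (‖exp (-z * I)‖ + ‖exp (z * I)‖) / 2 := by
        gcongr; exact norm_sub_le _ _
    _ = (rexp z.im + rexp (-z.im)) / 2 := by simp [Complex.norm_exp]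
    _ ≤ rexp |z.im| := by
        linarith [Real.exp_le_exp.2 (le_abs_self z.im), Real.exp_le_exp.2 (neg_le_abs z.im)]

lemma eventually_one_le_abs_cocompact : ∀ᶠ y : ℝ in cocompact ℝ, 1 ≤ |y| :=
  tendsto_norm_cocompact_atTop.eventually_ge_atTop 1

lemma isBigO_pow_abs_mul_exp (k : ℕ) (a : ℝ) {ε : ℝ} (hε : 0 < ε) :
    (fun y : ℝ => |y| ^ k * rexp (a * |y|)) =O[cocompact ℝ] fun y => rexp ((a + ε) * |y|) := by
  have h := ((isLittleO_pow_exp_pos_mul_atTop k hε).isBigO.comp_tendsto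
    tendsto_norm_cocompact_atTop).mul (isBigO_refl (fun y : ℝ => rexp (a * |y|)) _)
  refine h.congr (fun y => rfl) (fun y => ?_)
  simp only [Function.comp, Real.norm_eq_abs, ← Real.exp_add]
  ring_nf

lemma exists_isBigO_Gamma_add_mul_I (x : ℝ) :
    ∃ k : ℕ, (fun y : ℝ => Gamma (x + y * I)) =O[cocompact ℝ]
      fun y => |y| ^ k * rexp (-(π / 2) * |y|) := by
  set k : ℤ := ⌈x⌉ - 1
  set x₀ : ℝ := x - k
  have hx₀ : 0 < x₀ := by simp only [x₀, k]; push_cast; linarith [Int.ceil_lt_add_one x]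
  have hx₀1 : x₀ ≤ 1 := by simp only [x₀, k]; push_cast; linarith [Int.le_ceil x]
  have hshift : (x : ℂ) + (-k).toNat = x₀ + k.toNat := by
    have h : (k.toNat : ℂ) - ((-k).toNat : ℂ) = k := by exact_mod_cast Int.toNat_sub_toNat_neg k
    simp only [x₀]
    push_cast
    linear_combination -h
  set m := k.toNat
  refine ⟨m + 1, IsBigO.of_bound ((m + 2) ^ m * Real.Gamma x₀ * (2 * π)) ?_⟩
  filter_upwards [eventually_one_le_abs_cocompact] with y hy
  have hΓ₀ := (norm_Gamma_le_Gamma_mul_norm_Gamma_one_add hx₀ hx₀1 y).trans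
    (mul_le_mul_of_nonneg_left (norm_Gamma_one_add_mul_I_le hy) (Real.Gamma_pos_of_pos hx₀).le)
  have hnorm : ‖(x₀ : ℂ) + y * I‖ + m ≤ (m + 2) * |y| := by
    have := norm_add_le (x₀ : ℂ) (y * I)
    rw [norm_real, Real.norm_of_nonneg hx₀.le, norm_mul, norm_I, mul_one, norm_real,
      Real.norm_eq_abs] at this
    nlinarith
  calc ‖Gamma (x + y * I)‖ ≤ ‖Gamma (x + y * I + (-k).toNat)‖ :=
        norm_Gamma_le_norm_Gamma_add_nat (by simpa using hy) _
    _ = ‖Gamma (x₀ + y * I + m)‖ := by congr 2; linear_combination hshift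
    _ ≤ (‖(x₀ : ℂ) + y * I‖ + m) ^ m * ‖Gamma (x₀ + y * I)‖ :=
        norm_Gamma_add_nat_le (by simpa using (one_pos.trans_le hy).ne') _
    _ ≤ ((m + 2) * |y|) ^ m * (Real.Gamma x₀ * (2 * π * |y| * rexp (-(π / 2) * |y|))) := by
        gcongr
    _ = (m + 2) ^ m * Real.Gamma x₀ * (2 * π) * ‖|y| ^ (m + 1) * rexp (-(π / 2) * |y|)‖ := by
        rw [Real.norm_of_nonneg (by positivity), mul_pow]
        ring

lemma isBigO_Gamma_add_mul_I (x : ℝ) {ε : ℝ} (hε : 0 < ε) :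
    (fun y : ℝ => Gamma (x + y * I)) =O[cocompact ℝ] fun y => rexp ((-(π / 2) + ε) * |y|) :=
  let ⟨k, hk⟩ := exists_isBigO_Gamma_add_mul_I x
  hk.trans (isBigO_pow_abs_mul_exp k _ hε)

lemma isBigO_comp_mul_left_of_isBigO_exp_abs {f : ℝ → ℂ} {c b : ℝ} (hb : b ≠ 0)
    (hf : f =O[cocompact ℝ] fun y => rexp (c * |y|)) :
    (fun t => f (b * t)) =O[cocompact ℝ] fun t => rexp (c * |b| * |t|) := by
  simpa [Function.comp_def, abs_mul, mul_assoc] using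
    hf.comp_tendsto (tendsto_cocompact_mul_left₀ hb)

lemma inv_Gamma_eq_Gamma_one_sub_mul_sin {s : ℂ} (hs : sin (π * s) ≠ 0) :
    (Gamma s)⁻¹ = Gamma (1 - s) * sin (π * s) / π := by
  refine inv_eq_of_mul_eq_one_right ?_
  rw [← mul_div_assoc, ← mul_assoc, Gamma_mul_Gamma_one_sub, div_mul_cancel₀ _ hs,
    div_self (ofReal_ne_zero.2 Real.pi_ne_zero)]

lemma isBigO_inv_Gamma_add_mul_I (x : ℝ) {ε : ℝ} (hε : 0 < ε) :
    (fun y : ℝ => (Gamma (x + y * I))⁻¹) =O[cocompact ℝ] fun y => rexp ((π / 2 + ε) * |y|) := by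
  have hΓ := isBigO_comp_mul_left_of_isBigO_exp_abs (neg_ne_zero.2 one_ne_zero)
    (isBigO_Gamma_add_mul_I (1 - x) hε)
  have hsin : (fun y : ℝ => sin (π * (x + y * I)) / π) =O[cocompact ℝ]
      fun y => rexp (π * |y|) := by
    refine IsBigO.of_bound π⁻¹ (Eventually.of_forall fun y => ?_)
    rw [norm_div, norm_real, Real.norm_of_nonneg Real.pi_pos.le, Real.norm_of_nonneg (by positivity),
      div_eq_inv_mul]
    refine mul_le_mul_of_nonneg_left ((norm_sin_le_exp_abs_im _).trans_eq ?_) (by positivity)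
    simp [abs_mul, abs_of_pos Real.pi_pos]
  refine (hΓ.mul hsin).congr' ?_ (Eventually.of_forall fun y => ?_)
  · filter_upwards [eventually_one_le_abs_cocompact] with y hy
    have hs : sin (π * (x + y * I)) ≠ 0 := by
      rw [Ne, sin_eq_zero_iff]
      rintro ⟨n, hn⟩
      have hy0 : y = 0 := by simpa using congrArg im hn
      norm_num [hy0] at hy
    rw [inv_Gamma_eq_Gamma_one_sub_mul_sin hs, mul_div_assoc]
    congr 2
    push_cast
    ring
  · simp only [abs_neg, abs_one, ← Real.exp_add]
    ring_nf

lemma isBigO_HFun_add_mul_I (d : ℕ) {α β : ℝ} (γ σ ℓ : ℝ) (hα : 0 < α) (hα2 : α < 2)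
    (hβ : 0 < β) :
    (fun t : ℝ => HFun d α β γ σ (ℓ + t * I)) =O[cocompact ℝ]
      fun t => rexp (-(π * (2 - α) / 4) * |t|) := by
  -- chosen so that the five exponents below add up to `-π(2-α)/4`
  set ε := π * (2 - α) / (4 * (2 * β + α + 2))
  have hε : 0 < ε := by have := Real.pi_pos; apply div_pos <;> nlinarith
  have h1 := isBigO_comp_mul_left_of_isBigO_exp_abs hβ.ne'
    (isBigO_Gamma_add_mul_I (d / 2 + γ + β * ℓ) hε)
  have h2 := isBigO_comp_mul_left_of_isBigO_exp_abs one_ne_zero (isBigO_Gamma_add_mul_I (1 + ℓ) hε)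
  have h3 := isBigO_comp_mul_left_of_isBigO_exp_abs (neg_ne_zero.2 one_ne_zero)
    (isBigO_Gamma_add_mul_I (-ℓ) hε)
  have h4 := isBigO_comp_mul_left_of_isBigO_exp_abs (neg_ne_zero.2 hβ.ne')
    (isBigO_inv_Gamma_add_mul_I (-γ - β * ℓ) hε)
  have h5 := isBigO_comp_mul_left_of_isBigO_exp_abs hα.ne'
    (isBigO_inv_Gamma_add_mul_I (1 - σ + α * ℓ) hε)
  refine ((((h1.mul h2).mul h3).mul h4).mul h5).congr (fun t => ?_) (fun t => ?_)
  · simp only [HFun, div_eq_mul_inv, mul_inv]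
    push_cast
    ring_nf
  · simp only [abs_neg, abs_one, abs_of_pos hα, abs_of_pos hβ, ← Real.exp_add]
    congr 1
    simp only [ε]
    field_simp
    ring

lemma continuous_Gamma_comp {f : ℝ → ℂ} (hf : Continuous f) (hre : ∀ t, 0 < (f t).re) :
    Continuous fun t => Gamma (f t) :=
  continuous_iff_continuousAt.2 fun t => (continuousAt_Gamma _ fun m hm => by
    have := congrArg re hm
    simp only [neg_re, natCast_re] at this
    linarith [hre t, m.cast_nonneg (α := ℝ)]).comp hf.continuousAt

lemma continuous_HFun_add_mul_I (d : ℕ) (α β γ σ : ℝ) {ℓ : ℝ} (h1 : 0 < d / 2 + γ + β * ℓ)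
    (h2 : -1 < ℓ) (h3 : ℓ < 0) :
    Continuous fun t : ℝ => HFun d α β γ σ (ℓ + t * I) := by
  simp only [HFun, div_eq_mul_inv, mul_inv]
  refine (((continuous_Gamma_comp (by fun_prop) fun t => ?_).mul
    (continuous_Gamma_comp (by fun_prop) fun t => ?_)).mul
    (continuous_Gamma_comp (by fun_prop) fun t => ?_)).mul
    ((differentiable_one_div_Gamma.continuous.comp (by fun_prop)).mul
      (differentiable_one_div_Gamma.continuous.comp (by fun_prop))) <;> simp <;> linarith

lemma integrable_exp_mul_abs {c : ℝ} (hc : c < 0) : Integrable fun t : ℝ => rexp (c * |t|) := by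
  rw [← integrableOn_univ, ← Set.Iic_union_Ioi (a := 0)]
  refine ((integrableOn_exp_mul_Iic (neg_pos.2 hc) 0).congr_fun (fun t ht => ?_)
    measurableSet_Iic).union ((integrableOn_exp_mul_Ioi hc 0).congr_fun (fun t ht => ?_)
    measurableSet_Ioi)
  · rw [abs_of_nonpos ht]; ring_nf
  · rw [abs_of_pos ht]

theorem stmt0_general (d : ℕ) (α β γ σ : ℝ) (hα : 0 < α) (hα2 : α < 2)
    (hβ : 0 < β) (r : ℝ) (ℓ : ℝ)
    (hℓ1 : max (-1 : ℝ) (-((d : ℝ) + 2 * γ) / (2 * β)) < ℓ) (hℓ2 : ℓ < 0) :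
    MeasureTheory.Integrable (fun t : ℝ => mellinKernel d α β γ σ ℓ r t) := by
  obtain ⟨hℓ1, hℓβ⟩ := max_lt_iff.1 hℓ1
  have hpos : 0 < (d : ℝ) / 2 + γ + β * ℓ := by
    rw [div_lt_iff₀ (by positivity)] at hℓβ; linarith
  have hexp : (fun t : ℝ => exp (-(ℓ + t * I) * Real.log r)) =O[cocompact ℝ] fun _ => (1 : ℝ) :=
    IsBigO.of_bound (rexp (-ℓ * Real.log r)) (Eventually.of_forall fun t => by
      simp [Complex.norm_exp])
  refine LocallyIntegrable.integrable_of_isBigO_cocompact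
    ((continuous_HFun_add_mul_I d α β γ σ hpos hℓ1 hℓ2).mul (by fun_prop)).locallyIntegrable
    (by simpa only [mellinKernel, mul_one] using (isBigO_HFun_add_mul_I d γ σ ℓ hα hα2 hβ).mul hexp)
    ((integrable_exp_mul_abs ?_).integrableAtFilter _)
  have := Real.pi_pos
  nlinarith

/-- For every `r > 0` and every real `ℓ` with
`max(-1, -(d+2γ)/(2β)) < ℓ < 0`, the function `t ↦ 𝓗_{σ,γ}(ℓ+it)·r^{-(ℓ+it)}` is
Bochner integrable on `ℝ`; in particular the Mellin–Barnes integral `𝔥_{σ,γ}(r)`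
is well defined. -/
theorem stmt0 (d : ℕ) (hd : 1 ≤ d) (α β γ σ : ℝ) (hα : 0 < α) (hα2 : α < 2)
    (hβ : 0 < β) (hγ : 0 ≤ γ) (r : ℝ) (hr : 0 < r) (ℓ : ℝ)
    (hℓ1 : max (-1 : ℝ) (-((d : ℝ) + 2 * γ) / (2 * β)) < ℓ) (hℓ2 : ℓ < 0) :
    MeasureTheory.Integrable (fun t : ℝ => mellinKernel d α β γ σ ℓ r t) :=
  stmt0_general d α β γ σ hα hα2 hβ r ℓ hℓ1 hℓ2
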